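/- Let F be a finite field with Q elements and let h ∈ F[x] be a squarefree monic polynomial with factorization h = g·g_1⋯g_k into pairwise distinct monic irreducible polynomials, where deg g = m and deg g_i ≥ 1 for each i. Let B ≥ 2 be an integer, and suppose that for every 1 ≤ i ≤ k, gcd(Q^{deg g_i} − 1, Q^m − 1) is B-smooth. Let H be a subgroup of the unit group (F[x]/(h))^× such that the composite of the inclusion H ↪ (F[x]/(h))^× with the reduction-mod-g map (F[x]/(h))^× → (F[x]/(g))^× is surjective. If H is isomorphic to ℤ/d_1ℤ ⊕ ℤ/d_2ℤ ⊕ ⋯ ⊕ ℤ/d_rℤ with d_j dividing d_{j+1} for 1 ≤ j < r and r ≥ 2, then gcd(d_{r−1}, Q^m − 1) is B-smooth. -/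

import Mathlib

/-!
Suppose a prime `ℓ > B` divides `gcd(d_{r-1}, Q^m - 1)`. Then `ℓ` also divides `d_r`, so `H` has at
least `ℓ²` elements killed by `ℓ`. By the Chinese remainder theorem `(F[x]/(h))ˣ` is the product
of the unit groups of the fields `F[x]/(g)` and `F[x]/(gᵢ)`. Smoothness forces
`ℓ ∤ Q^{deg gᵢ} - 1`, so the `ℓ`-torsion lives in the `g`-component, where it consists of
`ℓ`-th roots of unity of a field: at most `ℓ` elements.
-/

open Function Polynomial

theorem card_pow_eq_one_le_of_injective {M M' : Type*} [Monoid M] [Monoid M'] [Finite M']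
    (f : M →* M') (hf : Injective f) (n : ℕ) :
    Nat.card {x : M // x ^ n = 1} ≤ Nat.card {y : M' // y ^ n = 1} :=
  Nat.card_le_card_of_injective (fun x => ⟨f x, by rw [← map_pow, x.2, map_one]⟩)
    fun _ _ hxy => Subtype.ext (hf (congrArg Subtype.val hxy))

theorem card_pow_eq_one_pi {ι : Type*} [Fintype ι] {M : ι → Type*} [∀ i, Monoid (M i)] (n : ℕ) :
    Nat.card {x : ∀ i, M i // x ^ n = 1} = ∏ i, Nat.card {y : M i // y ^ n = 1} := by
  rw [← Nat.card_pi]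
  refine Nat.card_congr <| (Equiv.subtypeEquivRight fun x => ?_).trans Equiv.subtypePiEquivPi
  simp only [funext_iff, Pi.pow_apply, Pi.one_apply]

section Group

variable {G : Type*} [Group G]

theorem card_pow_eq_one_of_coprime {n : ℕ} (hn : n.Coprime (Nat.card G)) :
    Nat.card {x : G // x ^ n = 1} = 1 := by
  rw [Nat.card_eq_one_iff_unique]
  refine ⟨⟨fun x y => Subtype.ext ?_⟩, ⟨⟨1, one_pow n⟩⟩⟩
  have hone : ∀ z : {x : G // x ^ n = 1}, (z : G) = 1 := fun z => by
    rw [← orderOf_eq_one_iff, ← Nat.dvd_one, ← hn.gcd_eq_one]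
    exact Nat.dvd_gcd (orderOf_dvd_of_pow_eq_one z.2) (orderOf_dvd_natCard _)
  rw [hone x, hone y]

theorem le_card_pow_eq_one_of_dvd [Finite G] {p : ℕ} [Fact p.Prime] (hdvd : p ∣ Nat.card G) :
    p ≤ Nat.card {x : G // x ^ p = 1} := by
  obtain ⟨g, hg⟩ := exists_prime_orderOf_dvd_card' p hdvd
  have hcard : Nat.card (Subgroup.zpowers g) = p := by rw [Nat.card_zpowers, hg]
  calc p = Nat.card {x : Subgroup.zpowers g // x ^ p = 1} := by
        rw [← hcard, Nat.card_congr (Equiv.subtypeUnivEquiv fun x => pow_card_eq_one')]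
    _ ≤ Nat.card {x : G // x ^ p = 1} :=
        card_pow_eq_one_le_of_injective _ (Subgroup.subtype_injective _) p

end Group

theorem pow_card_le_card_pow_eq_one_pi {ι : Type*} [Fintype ι] {G : ι → Type*}
    [∀ i, Group (G i)] [∀ i, Finite (G i)] {p : ℕ} [Fact p.Prime] (s : Finset ι)
    (hs : ∀ i ∈ s, p ∣ Nat.card (G i)) :
    p ^ s.card ≤ Nat.card {x : ∀ i, G i // x ^ p = 1} := by
  rw [card_pow_eq_one_pi, ← Finset.prod_const]
  calc ∏ _i ∈ s, p ≤ ∏ i ∈ s, Nat.card {x : G i // x ^ p = 1} :=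
        Finset.prod_le_prod' fun i hi => le_card_pow_eq_one_of_dvd (hs i hi)
    _ ≤ ∏ i, Nat.card {x : G i // x ^ p = 1} :=
        Finset.prod_le_prod_of_subset_of_one_le' (Finset.subset_univ s) fun i _ _ =>
          Nat.card_pos_iff.mpr ⟨⟨⟨1, one_pow p⟩⟩, inferInstance⟩

theorem card_pow_eq_one_units_quotient_span_prod {R ι : Type*} [CommRing R] [Fintype ι]
    {f : ι → R} (hf : Pairwise (IsCoprime on f)) (n : ℕ) :
    Nat.card {u : (R ⧸ Ideal.span {∏ i, f i})ˣ // u ^ n = 1} =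
      ∏ i, Nat.card {u : (R ⧸ Ideal.span {f i})ˣ // u ^ n = 1} := by
  have hI : Pairwise (IsCoprime on fun i => Ideal.span {f i}) := fun i j hij =>
    (Ideal.isCoprime_span_singleton_iff _ _).mpr (hf hij)
  let e : (R ⧸ Ideal.span {∏ i, f i})ˣ ≃* ∀ i, (R ⧸ Ideal.span {f i})ˣ :=
    (Units.mapEquiv
      ((Ideal.quotEquivOfEq (Ideal.iInf_span_singleton fun i j hij => hf hij).symm).trans
        (Ideal.quotientInfRingEquivPiQuotient _ hI)).toMulEquiv).trans MulEquiv.piUnits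
  rw [← card_pow_eq_one_pi]
  exact Nat.card_congr (e.toEquiv.subtypeEquiv fun u => by simp [← map_pow])

theorem Polynomial.pairwise_isCoprime_of_monic_of_irreducible {K ι : Type*} [Field K]
    {f : ι → K[X]} (hf : Injective f) (hmonic : ∀ i, (f i).Monic) (hirr : ∀ i, Irreducible (f i)) :
    Pairwise (IsCoprime on f) := fun i j hij =>
  (hirr i).coprime_iff_not_dvd.mpr fun hdvd => hij <| hf <|
    eq_of_monic_of_associated (hmonic i) (hmonic j) ((hirr i).associated_of_dvd (hirr j) hdvd)

theorem Polynomial.natCard_units_quotient_span_irreducible {F : Type*} [Field F] [Fintype F]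
    {p : F[X]} (hp : Irreducible p) :
    Nat.card (F[X] ⧸ Ideal.span {p})ˣ = Fintype.card F ^ p.natDegree - 1 := by
  have := PrincipalIdealRing.isMaximal_of_irreducible hp
  let := Ideal.Quotient.field (Ideal.span {p})
  have : Module.Finite F (F[X] ⧸ Ideal.span {p}) := (AdjoinRoot.powerBasis hp.ne_zero).finite
  rw [Nat.card_units, Module.natCard_eq_pow_finrank (K := F), finrank_quotient_span_eq_natDegree,
    Nat.card_eq_fintype_card]

theorem Polynomial.card_pow_eq_one_units_quotient_span_le {K : Type*} [Field K] {p : K[X]}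
    (hp : Irreducible p) (n : ℕ) [NeZero n] :
    Nat.card {u : (K[X] ⧸ Ideal.span {p})ˣ // u ^ n = 1} ≤ n := by
  have := (PrincipalIdealRing.isMaximal_of_irreducible hp).isPrime
  exact card_rootsOfUnity _ n

theorem Polynomial.card_pow_eq_one_units_quotient_span_mul_prod_le {F : Type*} [Field F]
    [Fintype F] {k : ℕ} {g : F[X]} {gi : Fin k → F[X]} (hgmonic : g.Monic) (hgirr : Irreducible g)
    (hgi : ∀ i, (gi i).Monic ∧ Irreducible (gi i)) (hinj : Injective gi) (hne : ∀ i, gi i ≠ g)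
    {ℓ : ℕ} (hℓ : ℓ.Prime) (hndvd : ∀ i, ¬ ℓ ∣ Fintype.card F ^ (gi i).natDegree - 1) :
    Nat.card {u : (F[X] ⧸ Ideal.span {g * ∏ i, gi i})ˣ // u ^ ℓ = 1} ≤ ℓ := by
  have hf : Pairwise (IsCoprime on (Fin.cons g gi : Fin (k + 1) → F[X])) :=
    pairwise_isCoprime_of_monic_of_irreducible
      (Fin.cons_injective_iff.mpr ⟨fun ⟨i, hi⟩ => hne i hi, hinj⟩)
      (Fin.cases hgmonic fun i => (hgi i).1) (Fin.cases hgirr fun i => (hgi i).2)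
  have : NeZero ℓ := ⟨hℓ.ne_zero⟩
  rw [← Fin.prod_cons, card_pow_eq_one_units_quotient_span_prod hf, Fin.prod_univ_succ,
    Fin.cons_zero, Finset.prod_eq_one fun i _ => ?_, mul_one]
  · exact card_pow_eq_one_units_quotient_span_le hgirr ℓ
  · rw [Fin.cons_succ]
    refine card_pow_eq_one_of_coprime ?_
    rw [natCard_units_quotient_span_irreducible (hgi i).2]
    exact hℓ.coprime_iff_not_dvd.mpr (hndvd i)

/-- Lemma 2.2: if the subgroup `H` of `(F[x]/(h))ˣ` surjects onto `(F[x]/(g))ˣ` under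
reduction mod `g`, then the second largest invariant factor of `H` has `B`-smooth gcd
with `Q^m - 1`. -/
theorem stmt1 {F : Type*} [Field F] [Fintype F]
    (h g : Polynomial F) (k : ℕ) (gi : Fin k → Polynomial F)
    (hmonich : h.Monic)
    (hfact : h = g * ∏ i, gi i)
    (hgmonic : g.Monic) (hgirr : Irreducible g)
    (hgi : ∀ i, (gi i).Monic ∧ Irreducible (gi i))
    (hinj : Function.Injective gi) (hne : ∀ i, gi i ≠ g)
    (m : ℕ)
    (B : ℕ)
    (hsm : ∀ i, ∀ ℓ : ℕ, ℓ.Prime →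
      ℓ ∣ Nat.gcd (Fintype.card F ^ (gi i).natDegree - 1) (Fintype.card F ^ m - 1) → ℓ ≤ B)
    (H : Subgroup (Polynomial F ⧸ Ideal.span {h})ˣ)
    (r : ℕ) (hr : 2 ≤ r) (d : Fin r → ℕ) (hd : ∀ j, 0 < d j)
    (hdvd : ∀ j : Fin r, ∀ hj : (j : ℕ) + 1 < r, d j ∣ d ⟨(j : ℕ) + 1, hj⟩)
    (hiso : Nonempty (H ≃* ((j : Fin r) → Multiplicative (ZMod (d j))))) :
    ∀ ℓ : ℕ, ℓ.Prime →
      ℓ ∣ Nat.gcd (d ⟨r - 2, by omega⟩) (Fintype.card F ^ m - 1) → ℓ ≤ B := by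
  intro ℓ hℓ hℓdvd
  by_contra hℓB
  have hndvd : ∀ i, ¬ ℓ ∣ Fintype.card F ^ (gi i).natDegree - 1 := fun i hi =>
    hℓB (hsm i ℓ hℓ (Nat.dvd_gcd hi (hℓdvd.trans (Nat.gcd_dvd_right _ _))))
  have : Fact ℓ.Prime := ⟨hℓ⟩
  have : ∀ j, NeZero (d j) := fun j => ⟨(hd j).ne'⟩
  have : Module.Finite F (F[X] ⧸ Ideal.span {h}) := hmonich.finite_quotient
  have : Finite (F[X] ⧸ Ideal.span {h}) := Module.finite_of_finite F
  obtain ⟨ψ⟩ := hiso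
  have hd₁ : ℓ ∣ d ⟨r - 2, by omega⟩ := hℓdvd.trans (Nat.gcd_dvd_left _ _)
  have hd₂ : ℓ ∣ d ⟨r - 1, by omega⟩ := by
    obtain ⟨n, rfl⟩ : ∃ n, r = n + 2 := ⟨r - 2, by omega⟩
    exact Nat.dvd_trans hd₁ (hdvd ⟨n, by omega⟩ (Nat.lt_succ_self _))
  have hlower : ℓ ^ 2 ≤ Nat.card {x : H // x ^ ℓ = 1} := by
    calc ℓ ^ 2 = ℓ ^ ({⟨r - 2, by omega⟩, ⟨r - 1, by omega⟩} : Finset (Fin r)).card := by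
          rw [Finset.card_pair (by simp only [ne_eq, Fin.mk.injEq]; omega)]
      _ ≤ Nat.card {x : ∀ j, Multiplicative (ZMod (d j)) // x ^ ℓ = 1} := by
          refine pow_card_le_card_pow_eq_one_pi _ fun j hj => ?_
          rw [Finset.mem_insert, Finset.mem_singleton] at hj
          rcases hj with rfl | rfl <;> simpa
      _ ≤ Nat.card {x : H // x ^ ℓ = 1} :=
          card_pow_eq_one_le_of_injective ψ.symm.toMonoidHom ψ.symm.injective ℓ
  have hupper : Nat.card {x : H // x ^ ℓ = 1} ≤ ℓ :=
    (card_pow_eq_one_le_of_injective _ H.subtype_injective ℓ).trans <| hfact ▸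
      card_pow_eq_one_units_quotient_span_mul_prod_le hgmonic hgirr hgi hinj hne hℓ hndvd
  nlinarith [hlower.trans hupper, hℓ.two_le]
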